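/- Quantitative Buckingham theorem, rank-deficient case: With A an m×n real matrix of rank r < n, k := n−r, β ∈ ℝ^m, ε ≥ 0, F ∈ S(A,β,ε), y ∈ ℝⁿ and δ ≥ 0 with ‖Ayᵀ − βᵀ‖_∞ ≤ δ; D := (Aᵀ)†; X the k×n matrix whose rows x₁,…,x_k form a basis of ker(A); πₛ(u) := u^{xₛ}; ψ(w) := exp(X†·log(w)ᵀ); G(w) := F(ψ(w))/ψ(w)^y; M := max_{s,j} |x_{sj}|; K > 1. If v ∈ (ℝ_{>0})ⁿ with K⁻¹ ≤ v_i ≤ K for all i, then |F(v) − G(π₁(v),…,π_k(v))·v^y| ≤ |F(v)|·((1+ε)·K^{mδ‖D‖(nM‖X†‖+1)} − 1). -/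

import Mathlib

open Matrix

/-- `v^y := ∏ i, v i ^ y i` (real powers). -/
noncomputable def ppow {ι : Type*} [Fintype ι] (v y : ι → ℝ) : ℝ := ∏ i, v i ^ y i

/-- The scaled vector `(v₁c^{α₁}, …, vₙc^{αₙ})`, where `αⱼᵀ` are the columns of `A`
and `c^α := ∏ i, c i ^ α i`. -/
noncomputable def scale {m n : ℕ} (A : Matrix (Fin m) (Fin n) ℝ) (c : Fin m → ℝ)
    (v : Fin n → ℝ) : Fin n → ℝ := fun j => v j * ppow c (fun i => A i j)

/-- `F ∈ S(A,β,ε)`: `|F(v₁c^{α₁},…,vₙc^{αₙ}) − F(v)c^β| ≤ ε|F(v)|c^β` for all positive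
`v ∈ ℝⁿ`, `c ∈ ℝ^m`. `S(A,β) := S(A,β,0)`. -/
def memS {m n : ℕ} (A : Matrix (Fin m) (Fin n) ℝ) (β : Fin m → ℝ) (ε : ℝ)
    (F : (Fin n → ℝ) → ℝ) : Prop :=
  ∀ v : Fin n → ℝ, (∀ j, 0 < v j) → ∀ c : Fin m → ℝ, (∀ i, 0 < c i) →
    |F (scale A c v) - F v * ppow c β| ≤ ε * |F v| * ppow c β

/-!
Put `L = log v` and `ξ = X†X L − L`. Since `X X† X = X`, `ξ` is killed by `X`; the rows of `X`
span `ker A`, so `ξ ⊥ ker A`, and the pseudoinverse equations make `Aᵀ D` fix such vectors: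
`ξ = Aᵀ t` with `t = D ξ`. Hence `ψ(π(v)) = v · exp(Aᵀ t)` is the scaling of `v` by `c = exp t`,
and membership in `S(A,β,ε)` compares `F(ψ(π v))` with `F(v) e^{β·t}`. On the other hand
`G(π v) v^y = F(ψ(π v)) e^{-y·ξ} = F(ψ(π v)) e^{-(Ay)·t}`, so the two differ by the factor
`e^{-(Ay-β)·t}`, and `|(Ay-β)·t| ≤ m δ ‖D‖ (n M ‖X†‖ + 1) log K` follows from `|L| ≤ log K`.
-/

theorem ppow_exp {ι : Type*} [Fintype ι] (s y : ι → ℝ) :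
    ppow (fun i => Real.exp (s i)) y = Real.exp (y ⬝ᵥ s) := by
  rw [ppow, dotProduct, Real.exp_sum]
  refine Finset.prod_congr rfl fun i _ => ?_
  rw [Real.rpow_def_of_pos (Real.exp_pos _), Real.log_exp, mul_comm]

theorem ppow_eq_exp_dotProduct_log {ι : Type*} [Fintype ι] {v : ι → ℝ} (hv : ∀ i, 0 < v i)
    (y : ι → ℝ) : ppow v y = Real.exp (y ⬝ᵥ fun i => Real.log (v i)) := by
  rw [← ppow_exp]
  congr 1
  funext i
  exact (Real.exp_log (hv i)).symm

theorem ppow_mul_exp {ι : Type*} [Fintype ι] {v : ι → ℝ} (hv : ∀ i, 0 < v i) (s y : ι → ℝ) :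
    ppow (fun i => v i * Real.exp (s i)) y = ppow v y * Real.exp (y ⬝ᵥ s) := by
  rw [← ppow_exp, ppow, ppow, ppow, ← Finset.prod_mul_distrib]
  exact Finset.prod_congr rfl fun i _ => Real.mul_rpow (hv i).le (Real.exp_pos _).le

theorem ppow_pos {ι : Type*} [Fintype ι] {v : ι → ℝ} (hv : ∀ i, 0 < v i) (y : ι → ℝ) :
    0 < ppow v y :=
  Finset.prod_pos fun i _ => Real.rpow_pos_of_pos (hv i) _

theorem exp_sum_mul_log_ppow {ι κ : Type*} [Fintype ι] [Fintype κ] {v : κ → ℝ}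
    (hv : ∀ j, 0 < v j) (X : Matrix ι κ ℝ) (Xd : Matrix κ ι ℝ) (j : κ) :
    Real.exp (∑ s, Xd j s * Real.log (ppow v (X s))) =
      v j * Real.exp (((Xd * X) *ᵥ (fun i => Real.log (v i)) - fun i => Real.log (v i)) j) := by
  have hlog : ∀ s, Real.log (ppow v (X s)) = (X *ᵥ fun i => Real.log (v i)) s := fun s => by
    rw [ppow_eq_exp_dotProduct_log hv, Real.log_exp]
    rfl
  rw [Pi.sub_apply, Real.exp_sub, Real.exp_log (hv j), mul_div_cancel₀ _ (hv j).ne',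
    ← mulVec_mulVec]
  simp only [hlog]
  rfl

theorem memS.abs_mul_exp_neg_sub_le {m n : ℕ} {A : Matrix (Fin m) (Fin n) ℝ} {β : Fin m → ℝ}
    {ε : ℝ} {F : (Fin n → ℝ) → ℝ} (hF : memS A β ε F) {v : Fin n → ℝ} (hv : ∀ j, 0 < v j)
    (t : Fin m → ℝ) :
    |F (fun j => v j * Real.exp ((Aᵀ *ᵥ t) j)) * Real.exp (-(β ⬝ᵥ t)) - F v| ≤ ε * |F v| := by
  have h := hF v hv (fun i => Real.exp (t i)) fun i => Real.exp_pos _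
  have hscale : scale A (fun i => Real.exp (t i)) v =
      fun j => v j * Real.exp ((Aᵀ *ᵥ t) j) := by
    funext j
    rw [scale, ppow_exp]
    rfl
  rw [hscale, ppow_exp] at h
  have hcancel : Real.exp (β ⬝ᵥ t) * Real.exp (-(β ⬝ᵥ t)) = 1 := by
    rw [← Real.exp_add, add_neg_cancel, Real.exp_zero]
  calc _ = |F (fun j => v j * Real.exp ((Aᵀ *ᵥ t) j)) - F v * Real.exp (β ⬝ᵥ t)| *
        Real.exp (-(β ⬝ᵥ t)) := by
        rw [← abs_of_pos (Real.exp_pos (-(β ⬝ᵥ t))), ← abs_mul, sub_mul, mul_assoc, hcancel,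
          mul_one, abs_of_pos (Real.exp_pos _)]
    _ ≤ ε * |F v| * Real.exp (β ⬝ᵥ t) * Real.exp (-(β ⬝ᵥ t)) :=
        mul_le_mul_of_nonneg_right h (Real.exp_pos _).le
    _ = ε * |F v| := by rw [mul_assoc _ (Real.exp _), hcancel, mul_one]

theorem abs_dotProduct_le {ι : Type*} [Fintype ι] {x z : ι → ℝ} {a b : ℝ} (hx : ∀ i, |x i| ≤ a) (hz : ∀ i, |z i| ≤ b) :
    |x ⬝ᵥ z| ≤ Fintype.card ι * a * b :=
  calc |x ⬝ᵥ z| ≤ ∑ i, |x i * z i| := Finset.abs_sum_le_sum_abs _ _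
    _ ≤ ∑ _i : ι, a * b := Finset.sum_le_sum fun i _ => by
        rw [abs_mul]
        exact mul_le_mul (hx i) (hz i) (abs_nonneg _) ((abs_nonneg _).trans (hx i))
    _ = Fintype.card ι * a * b := by
        rw [Finset.sum_const, Finset.card_univ, nsmul_eq_mul, mul_assoc]

namespace Matrix

variable {ι κ μ : Type*} [Fintype ι] [Fintype κ]

theorem ker_mulVecLin_eq_span_row {K : Type*} [Field K] {A : Matrix μ κ K} {X : Matrix ι κ K}
    (hX : ∀ s, A *ᵥ X s = 0) (hind : LinearIndependent K X)
    (hcard : Fintype.card ι = Fintype.card κ - A.rank) :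
    LinearMap.ker A.mulVecLin = Submodule.span K (Set.range X) := by
  have hle : Submodule.span K (Set.range X) ≤ LinearMap.ker A.mulVecLin := by
    rw [Submodule.span_le]
    rintro _ ⟨s, rfl⟩
    exact hX s
  refine (Submodule.eq_of_le_of_finrank_le hle ?_).symm
  have hdim := A.mulVecLin.finrank_range_add_finrank_ker
  rw [Module.finrank_fintype_fun_eq_card] at hdim
  have hrank : A.rank = Module.finrank K (LinearMap.range A.mulVecLin) := rfl
  rw [finrank_span_eq_card hind, hcard]
  omega

theorem dotProduct_eq_zero_of_mem_span_row {R : Type*} [CommRing R] {X : Matrix ι κ R}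
    {z ξ : κ → R} (hz : z ∈ Submodule.span R (Set.range X)) (hξ : X *ᵥ ξ = 0) :
    z ⬝ᵥ ξ = 0 := by
  obtain ⟨d, rfl⟩ : z ∈ LinearMap.range X.vecMulLinear := by rwa [range_vecMulLinear]
  rw [vecMulLinear_apply, ← dotProduct_mulVec, hξ, dotProduct_zero]

theorem mulVec_mulVec_eq_self_of_orthogonal_ker [Fintype μ] {R : Type*} [Field R] [LinearOrder R]
    [IsStrictOrderedRing R] {A D : Matrix μ κ R} (hD1 : Aᵀ * D * Aᵀ = Aᵀ)
    (hD3 : (Aᵀ * D)ᵀ = Aᵀ * D) {ξ : κ → R} (hξ : ∀ z, A *ᵥ z = 0 → z ⬝ᵥ ξ = 0) :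
    Aᵀ *ᵥ (D *ᵥ ξ) = ξ := by
  have hA : A * (Aᵀ * D) = A := by
    simpa only [transpose_mul, transpose_transpose, hD3] using congrArg transpose hD1
  set η := ξ - Aᵀ *ᵥ (D *ᵥ ξ)
  have hAη : A *ᵥ η = 0 := by
    simp only [η, mulVec_sub, mulVec_mulVec, hA, sub_self]
  have hηη : η ⬝ᵥ η = 0 := by
    calc η ⬝ᵥ η = η ⬝ᵥ ξ - (A *ᵥ η) ⬝ᵥ (D *ᵥ ξ) := by
          rw [← vecMul_transpose, ← dotProduct_mulVec, ← dotProduct_sub]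
      _ = 0 := by rw [hξ η hAη, hAη, zero_dotProduct, sub_zero]
  exact (sub_eq_zero.1 (dotProduct_self_eq_zero.1 hηη)).symm

theorem abs_mulVec_le {B : Matrix ι κ ℝ} {x : κ → ℝ} {c : ℝ} (hx : ∀ j, |x j| ≤ c) (i : ι) :
    |(B *ᵥ x) i| ≤ (⨆ i, ∑ j, |B i j|) * c := by
  rcases isEmpty_or_nonempty κ with hκ | ⟨⟨j₀⟩⟩
  · simp [mulVec, dotProduct]
  calc |(B *ᵥ x) i| ≤ ∑ j, |B i j * x j| := Finset.abs_sum_le_sum_abs _ _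
    _ ≤ ∑ j, |B i j| * c := Finset.sum_le_sum fun j _ => by
        rw [abs_mul]
        exact mul_le_mul_of_nonneg_left (hx j) (abs_nonneg _)
    _ = (∑ j, |B i j|) * c := (Finset.sum_mul _ _ _).symm
    _ ≤ (⨆ i, ∑ j, |B i j|) * c :=
        mul_le_mul_of_nonneg_right (le_ciSup (f := fun i => ∑ j, |B i j|)
          (Set.finite_range _).bddAbove i) ((abs_nonneg _).trans (hx j₀))

theorem abs_mul_mulVec_sub_le (X : Matrix ι κ ℝ) (Xd : Matrix κ ι ℝ) {x : κ → ℝ} {c : ℝ}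
    (hx : ∀ j, |x j| ≤ c) (j : κ) :
    |((Xd * X) *ᵥ x - x) j| ≤
      (Fintype.card κ * (⨆ s, ⨆ j, |X s j|) * (⨆ j, ∑ s, |Xd j s|) + 1) * c := by
  set M := ⨆ s, ⨆ j, |X s j|
  have hM : ∀ s j, |X s j| ≤ M := fun s j =>
    le_ciSup_of_le (Set.finite_range _).bddAbove s
      (le_ciSup (f := fun j => |X s j|) (Set.finite_range _).bddAbove j)
  have hXx : ∀ s, |(X *ᵥ x) s| ≤ Fintype.card κ * M * c := fun s => abs_dotProduct_le (hM s) hx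
  calc |((Xd * X) *ᵥ x - x) j| ≤ |(Xd *ᵥ (X *ᵥ x)) j| + |x j| := by
        rw [← mulVec_mulVec]; exact abs_sub _ _
    _ ≤ (⨆ j, ∑ s, |Xd j s|) * (Fintype.card κ * M * c) + c :=
        add_le_add (abs_mulVec_le hXx j) (hx j)
    _ = _ := by ring

end Matrix

theorem abs_log_le_log_of_inv_le_of_le {K x : ℝ} (hK : 0 < K) (h1 : K⁻¹ ≤ x) (h2 : x ≤ K) :
    |Real.log x| ≤ Real.log K := by
  have hx : 0 < x := (inv_pos.2 hK).trans_le h1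
  rw [abs_le, ← Real.log_inv]
  exact ⟨Real.log_le_log (inv_pos.2 hK) h1, Real.log_le_log hx h2⟩

theorem abs_one_sub_exp_le {θ Z : ℝ} (h : |θ| ≤ Z) : |1 - Real.exp θ| ≤ Real.exp Z - 1 := by
  obtain ⟨h1, h2⟩ := abs_le.1 h
  rw [abs_sub_comm, abs_le]
  constructor
  · linarith [Real.add_one_le_exp θ, Real.add_one_le_exp Z]
  · linarith [Real.exp_le_exp.2 h2]

theorem abs_sub_mul_le {a b q ε e : ℝ} (hab : |b - a| ≤ ε * |a|) (hq : |1 - q| ≤ e - 1) :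
    |a - b * q| ≤ |a| * ((1 + ε) * e - 1) := by
  have hb : |b| ≤ (1 + ε) * |a| := by linarith [abs_sub_abs_le_abs_sub b a]
  calc |a - b * q| = |(a - b) + b * (1 - q)| := by ring_nf
    _ ≤ |a - b| + |b| * |1 - q| := (abs_add_le _ _).trans_eq (by rw [abs_mul])
    _ ≤ ε * |a| + (1 + ε) * |a| * (e - 1) := by
        rw [abs_sub_comm]
        exact add_le_add hab (mul_le_mul hb hq (abs_nonneg _) ((abs_nonneg _).trans hb))
    _ = |a| * ((1 + ε) * e - 1) := by ring

/-- `D` is the Moore–Penrose pseudoinverse of `Aᵀ`, `Xd` that of `X`; the operator norms induced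
by the max-norms are `‖D‖ = ⨆ i, ∑ j, |D i j|` and `‖Xd‖ = ⨆ j, ∑ s, |Xd j s|`, and
`M = max_{s,j} |X s j|`. -/
theorem quantitative_buckingham_rank_deficient_general (m n r k : ℕ)
    (A : Matrix (Fin m) (Fin n) ℝ)
    (hr : A.rank = r) (hk : k = n - r)
    (β : Fin m → ℝ) (ε : ℝ)
    (F : (Fin n → ℝ) → ℝ) (hF : memS A β ε F)
    (y : Fin n → ℝ) (δ : ℝ) (hy : ∀ i, |A.mulVec y i - β i| ≤ δ)
    (D : Matrix (Fin m) (Fin n) ℝ)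
    (hD1 : Aᵀ * D * Aᵀ = Aᵀ)
    (hD3 : (Aᵀ * D)ᵀ = Aᵀ * D)
    (X : Matrix (Fin k) (Fin n) ℝ)
    (hXker : ∀ s, A.mulVec (X s) = 0)
    (hXind : LinearIndependent ℝ (fun s => X s))
    (Xd : Matrix (Fin n) (Fin k) ℝ)
    (h1 : X * Xd * X = X)
    (ψ : (Fin k → ℝ) → (Fin n → ℝ))
    (hψ : ∀ w, ψ w = fun j => Real.exp (∑ t, Xd j t * Real.log (w t)))
    (G : (Fin k → ℝ) → ℝ) (hG : ∀ w, G w = F (ψ w) / ppow (ψ w) y)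
    (M : ℝ) (hM : M = ⨆ s, ⨆ j, |X s j|)
    (K : ℝ) (hK : 1 < K)
    (v : Fin n → ℝ) (hv : ∀ i, K⁻¹ ≤ v i ∧ v i ≤ K) :
    |F v - G (fun s => ppow v (X s)) * ppow v y| ≤
      |F v| * ((1 + ε) *
        K ^ ((m : ℝ) * δ * (⨆ i, ∑ j, |D i j|) *
          ((n : ℝ) * M * (⨆ j, ∑ s, |Xd j s|) + 1)) - 1) := by
  have hK0 : 0 < K := one_pos.trans hK
  have hv0 : ∀ j, 0 < v j := fun j => (inv_pos.2 hK0).trans_le (hv j).1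
  set L : Fin n → ℝ := fun j => Real.log (v j)
  have hL : ∀ j, |L j| ≤ Real.log K := fun j =>
    abs_log_le_log_of_inv_le_of_le hK0 (hv j).1 (hv j).2
  set ξ := (Xd * X) *ᵥ L - L with hξ
  have hXξ : X *ᵥ ξ = 0 := by rw [hξ, mulVec_sub, mulVec_mulVec, ← Matrix.mul_assoc, h1, sub_self]
  have hspan := ker_mulVecLin_eq_span_row hXker hXind (by simp only [Fintype.card_fin, hr, hk])
  set t := D *ᵥ ξ
  have hAt : Aᵀ *ᵥ t = ξ := mulVec_mulVec_eq_self_of_orthogonal_ker hD1 hD3 fun z hz =>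
    dotProduct_eq_zero_of_mem_span_row (hspan ▸ hz) hXξ
  have hψv : ψ (fun s => ppow v (X s)) = fun j => v j * Real.exp (ξ j) := by
    rw [hψ]
    exact funext (exp_sum_mul_log_ppow hv0 X Xd)
  have hyξ : y ⬝ᵥ ξ = β ⬝ᵥ t + (A *ᵥ y - β) ⬝ᵥ t := by
    rw [← hAt, dotProduct_mulVec, vecMul_transpose, sub_dotProduct, add_sub_cancel]
  have hGv : G (fun s => ppow v (X s)) * ppow v y =
      F (fun j => v j * Real.exp (ξ j)) * Real.exp (-(β ⬝ᵥ t)) *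
        Real.exp (-((A *ᵥ y - β) ⬝ᵥ t)) := by
    rw [hG, hψv, ppow_mul_exp hv0, hyξ, mul_assoc, ← Real.exp_add, ← neg_add, Real.exp_neg]
    field_simp [(ppow_pos hv0 y).ne']
  have hFu := hF.abs_mul_exp_neg_sub_le hv0 t
  rw [hAt] at hFu
  have hθ : |(A *ᵥ y - β) ⬝ᵥ t| ≤
      m * δ * (⨆ i, ∑ j, |D i j|) * (n * M * (⨆ j, ∑ s, |Xd j s|) + 1) * Real.log K := by
    have hξL := abs_mul_mulVec_sub_le X Xd hL
    rw [Fintype.card_fin, ← hM] at hξL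
    refine (abs_dotProduct_le hy (abs_mulVec_le hξL)).trans_eq ?_
    rw [Fintype.card_fin]
    ring
  rw [hGv, Real.rpow_def_of_pos hK0, mul_comm (Real.log K)]
  exact abs_sub_mul_le hFu (abs_one_sub_exp_le (by rwa [abs_neg]))

/-- Quantitative Buckingham theorem, rank-deficient case. `D` is the Moore–Penrose
pseudoinverse of `Aᵀ`, `Xd` that of `X`; the operator norms induced by the
max-norms are `‖D‖ = ⨆ i, ∑ j, |D i j|` and `‖Xd‖ = ⨆ j, ∑ s, |Xd j s|`, and
`M = max_{s,j} |X s j|`. -/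
theorem quantitative_buckingham_rank_deficient (m n r k : ℕ)
    (A : Matrix (Fin m) (Fin n) ℝ)
    (hr : A.rank = r) (hrn : r < n) (hk : k = n - r)
    (β : Fin m → ℝ) (ε : ℝ) (hε : 0 ≤ ε)
    (F : (Fin n → ℝ) → ℝ) (hF : memS A β ε F)
    (y : Fin n → ℝ) (δ : ℝ) (hδ : 0 ≤ δ) (hy : ∀ i, |A.mulVec y i - β i| ≤ δ)
    (D : Matrix (Fin m) (Fin n) ℝ)
    (hD1 : Aᵀ * D * Aᵀ = Aᵀ) (hD2 : D * Aᵀ * D = D)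
    (hD3 : (Aᵀ * D)ᵀ = Aᵀ * D) (hD4 : (D * Aᵀ)ᵀ = D * Aᵀ)
    (X : Matrix (Fin k) (Fin n) ℝ)
    (hXker : ∀ s, A.mulVec (X s) = 0)
    (hXind : LinearIndependent ℝ (fun s => X s))
    (Xd : Matrix (Fin n) (Fin k) ℝ)
    (h1 : X * Xd * X = X) (h2 : Xd * X * Xd = Xd)
    (h3 : (X * Xd)ᵀ = X * Xd) (h4 : (Xd * X)ᵀ = Xd * X)
    (ψ : (Fin k → ℝ) → (Fin n → ℝ))
    (hψ : ∀ w, ψ w = fun j => Real.exp (∑ t, Xd j t * Real.log (w t)))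
    (G : (Fin k → ℝ) → ℝ) (hG : ∀ w, G w = F (ψ w) / ppow (ψ w) y)
    (M : ℝ) (hM : M = ⨆ s, ⨆ j, |X s j|)
    (K : ℝ) (hK : 1 < K)
    (v : Fin n → ℝ) (hv : ∀ i, K⁻¹ ≤ v i ∧ v i ≤ K) :
    |F v - G (fun s => ppow v (X s)) * ppow v y| ≤
      |F v| * ((1 + ε) *
        K ^ ((m : ℝ) * δ * (⨆ i, ∑ j, |D i j|) *
          ((n : ℝ) * M * (⨆ j, ∑ s, |Xd j s|) + 1)) - 1) :=
  quantitative_buckingham_rank_deficient_general m n r k A hr hk β ε F hF y δ hy D hD1 hD3 X hXker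
    hXind Xd h1 ψ hψ G hG M hM K hK v hv
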